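/- Let M be a first-order structure, B a Boolean algebra, and ⟨·⟩ a map assigning to each closed formula (with parameters) an element of B such that: ⟨F⟩ = 1 whenever M ⊨ F, ⟨¬F⟩ = ¬⟨F⟩, ⟨F → G⟩ = ¬⟨F⟩ ∨ ⟨G⟩, ⟨∀y F(y)⟩ ≤ ⟨F(a)⟩ for every parameter a, and for each formula F(y) there is a Skolem element f_F with ⟨∀y F(y)⟩ = ⟨F(f_F)⟩. If D is an ultrafilter on B, then the structure M_D with the same domain, interpreting each relation R by R_D(a⃗) ⇔ ⟨R(a⃗)⟩ ∈ D, satisfies: for every formula F and parameters a⃗, M_D ⊨ F(a⃗) if and only if ⟨F(a⃗)⟩ ∈ D. In particular, M_D is an elementary extension of M (via the truth values of formulas with M-parameters). -/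
import Mathlib


/-- First-order formulas over a fixed type `A` of parameters, with atomic formulas
given by relation indices applied to lists of parameters; universal quantification
is represented by parameterized families of formulas. -/
inductive Fml (A : Type*) : Type _ where
  | bot : Fml A
  | atom : ℕ → List A → Fml A
  | imp : Fml A → Fml A → Fml A
  | all : (A → Fml A) → Fml A

/-- Satisfaction in the structure `M` with domain `A`, whose `n`-th relation is `int n`. -/
def Fml.Sat {A : Type*} (int : ℕ → List A → Prop) : Fml A → Prop
  | .bot => False
  | .atom n args => int n args
  | .imp f g => f.Sat int → g.Sat int
  | .all f => ∀ a, (f a).Sat int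

/-- Satisfaction in the structure `M_D`, interpreting each relation `R` by
`R_D(a⃗) ⇔ ⟨R(a⃗)⟩ ∈ D`. -/
def Fml.SatD {A : Type*} {B : Type*} (v : Fml A → B) (D : Set B) : Fml A → Prop
  | .bot => False
  | .atom n args => v (.atom n args) ∈ D
  | .imp f g => f.SatD v D → g.SatD v D
  | .all f => ∀ a, (f a).SatD v D

theorem los_boolean_valued {A : Type*} {B : Type*} [BooleanAlgebra B]
    (int : ℕ → List A → Prop) (v : Fml A → B)
    (hbot : v .bot = ⊥)
    (htrue : ∀ F : Fml A, F.Sat int → v F = ⊤)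
    (himp : ∀ F G : Fml A, v (.imp F G) = (v F)ᶜ ⊔ v G)
    (hall : ∀ (f : A → Fml A) (a : A), v (.all f) ≤ v (f a))
    (hskolem : ∀ f : A → Fml A, ∃ a : A, v (.all f) = v (f a))
    (D : Set B)
    (hup : ∀ α β : B, α ≤ β → α ∈ D → β ∈ D)
    (hmeet : ∀ α β : B, α ∈ D → β ∈ D → α ⊓ β ∈ D)
    (h0 : (⊥ : B) ∉ D)
    (hcomp : ∀ α : B, α ∈ D ∨ αᶜ ∈ D) :
    ∀ F : Fml A, (F.SatD v D ↔ v F ∈ D) ∧ (F.Sat int ↔ F.SatD v D) := by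
  have htop : (⊤ : B) ∈ D := by
    rcases hcomp ⊥ with h | h
    · exact absurd h h0
    · simpa using h
  -- Sat F ↔ v F ∈ D, directly
  have hsat : ∀ F : Fml A, F.Sat int ↔ v F ∈ D := by
    intro F
    constructor
    · intro h; rw [htrue F h]; exact htop
    · intro h
      by_contra hn
      have hSat : Fml.Sat int (.imp F .bot) := fun hf => hn hf
      have := htrue _ hSat
      rw [himp, hbot, sup_bot_eq] at this
      have : v F = ⊥ := by
        have := congrArg compl this
        simpa using this
      rw [this] at h; exact h0 h
  -- main induction
  have main : ∀ F : Fml A, F.SatD v D ↔ v F ∈ D := by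
    intro F
    induction F with
    | bot => simp [Fml.SatD, hbot, h0]
    | atom n args => exact Iff.rfl
    | imp F G ihF ihG =>
      rw [himp]
      constructor
      · intro h
        rcases hcomp (v F) with hf | hf
        · have hg : v G ∈ D := (ihG).mp (h ((ihF).mpr hf))
          exact hup _ _ le_sup_right hg
        · exact hup _ _ le_sup_left hf
      · intro h hf
        have hf' := (ihF).mp hf
        have : ((v F)ᶜ ⊔ v G) ⊓ v F ∈ D := hmeet _ _ h hf'
        have hle : ((v F)ᶜ ⊔ v G) ⊓ v F ≤ v G := by
          rw [inf_sup_right]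
          simp
        exact (ihG).mpr (hup _ _ hle this)
    | all f ih =>
      constructor
      · intro h
        obtain ⟨a, ha⟩ := hskolem f
        rw [ha]
        exact (ih a).mp (h a)
      · intro h a
        exact (ih a).mpr (hup _ _ (hall f a) h)
  intro F
  exact ⟨main F, (hsat F).trans (main F).symm⟩
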